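/- (Lemma 3.1, pointwise form) Let g̃ ∈ C²(Ω') ∩ C(closure(Ω')) be strictly positive and bounded on closure(Ω') and satisfy Σ_{i,j} ∂_j(a_{ij} ∂_i g̃) + 2(C + ‖c‖_∞) g̃ − Σ_i b_i ∂_i g̃ ≤ 0 in Ω'. Set g = g̃^{−1}. Let e ∈ C²(Ω') be bounded and satisfy −Σ_{i,j} ∂_j(a_{ij} ∂_i e) + Σ_i b_i ∂_i e + c e = F(x,u₁) − F(x,u₂) in Ω', where e = u₁ − u₂. Then Φ = e² g satisfies, pointwise in Ω', −Σ_{i,j} ∂_j(a_{ij} ∂_i Φ) + Σ_i c_i ∂_i Φ ≤ 0, where c_i = b_i + 2 Σ_j a_{ij} (∂_j g)/g. -/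

import Mathlib

/-!
Write `L u = Σ_j ∂_j (Σ_i a_ij ∂_i u)` (`divOp a u`) and `A(ξ, η) = Σ_ij ξ_i a_ij η_j`
(`coeffForm a x`). The drift
`c_i = b_i + 2 Σ_j a_ij ∂_j g / g` is chosen so that, for `Φ = e² g`, the mixed terms `e A(∇e, ∇g)`
produced by the Leibniz rule cancel:
`−LΦ + c·∇Φ = 2eg (−Le + b·∇e) − 2g A(∇e, ∇e) + e² (−Lg + b·∇g + 2 A(∇g, ∇g) / g)`,
and for `g = 1 / g̃` the last bracket is `(Lg̃ − b·∇g̃) / g̃²`. Substituting the equation for `e`,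
the bounds `e (F(x,u₁) − F(x,u₂)) ≤ C e²`, `−c e² ≤ ‖c‖_∞ e²`, ellipticity `A(∇e, ∇e) ≥ 0` and the
differential inequality for `g̃` make the right-hand side nonpositive.
-/

open Real Set

noncomputable def pd {n : ℕ} (i : Fin n) (u : (Fin n → ℝ) → ℝ) (x : Fin n → ℝ) : ℝ :=
  fderiv ℝ u x (Pi.single i 1)

section

variable {n : ℕ}

noncomputable def grad (u : (Fin n → ℝ) → ℝ) (x : Fin n → ℝ) : Fin n → ℝ := fun i => pd i u x

noncomputable def flux (a : Fin n → Fin n → (Fin n → ℝ) → ℝ) (u : (Fin n → ℝ) → ℝ) (j : Fin n)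
    (y : Fin n → ℝ) : ℝ :=
  ∑ i, a i j y * pd i u y

noncomputable def divOp (a : Fin n → Fin n → (Fin n → ℝ) → ℝ) (u : (Fin n → ℝ) → ℝ)
    (x : Fin n → ℝ) : ℝ :=
  ∑ j, pd j (flux a u j) x

noncomputable def coeffForm (a : Fin n → Fin n → (Fin n → ℝ) → ℝ) (x : Fin n → ℝ) :
    LinearMap.BilinForm ℝ (Fin n → ℝ) :=
  Matrix.toBilin' (Matrix.of fun i j => a i j x)

section PartialDerivatives

variable {i : Fin n} {u v : (Fin n → ℝ) → ℝ} {x : Fin n → ℝ}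

lemma pd_const (i : Fin n) (r : ℝ) (x : Fin n → ℝ) : pd i (fun _ => r) x = 0 := by
  simp [pd]

lemma pd_add (hu : DifferentiableAt ℝ u x) (hv : DifferentiableAt ℝ v x) :
    pd i (fun y => u y + v y) x = pd i u x + pd i v x := by
  simp [pd, fderiv_fun_add hu hv]

lemma pd_mul (hu : DifferentiableAt ℝ u x) (hv : DifferentiableAt ℝ v x) :
    pd i (fun y => u y * v y) x = pd i u x * v x + u x * pd i v x := by
  simp [pd, fderiv_fun_mul hu hv]
  ring

lemma pd_pow (m : ℕ) (hu : DifferentiableAt ℝ u x) :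
    pd i (fun y => u y ^ m) x = m * u x ^ (m - 1) * pd i u x := by
  simp [pd, fderiv_fun_pow m hu]

lemma pd_inv (hu : DifferentiableAt ℝ u x) (hx : u x ≠ 0) :
    pd i (fun y => (u y)⁻¹) x = -(u x ^ 2)⁻¹ * pd i u x := by
  have h := ((hasFDerivAt_inv hx).comp x hu.hasFDerivAt).fderiv
  simp only [Function.comp_def] at h
  simp [pd, h, mul_comm]

lemma contDiff_pd (i : Fin n) (hu : ContDiff ℝ 2 u) : ContDiff ℝ 1 (pd i u) :=
  (hu.fderiv_right (m := 1) (by norm_num)).clm_apply contDiff_const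

lemma grad_mul (hu : DifferentiableAt ℝ u x) (hv : DifferentiableAt ℝ v x) :
    grad (fun y => u y * v y) x = v x • grad u x + u x • grad v x := by
  ext i
  simp only [grad, pd_mul hu hv, Pi.add_apply, Pi.smul_apply, smul_eq_mul]
  ring

lemma grad_sq (hu : DifferentiableAt ℝ u x) :
    grad (fun y => u y ^ 2) x = (2 * u x) • grad u x := by
  ext i
  simp [grad, pd_pow 2 hu, mul_assoc]

lemma grad_inv (hu : DifferentiableAt ℝ u x) (hx : u x ≠ 0) :
    grad (fun y => (u y)⁻¹) x = -(u x ^ 2)⁻¹ • grad u x := by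
  ext i
  simp [grad, pd_inv hu hx]

end PartialDerivatives

section DivergenceForm

variable {a : Fin n → Fin n → (Fin n → ℝ) → ℝ} {u v : (Fin n → ℝ) → ℝ} {x : Fin n → ℝ}

lemma contDiff_flux (ha : ∀ i j, ContDiff ℝ 2 (a i j)) (hu : ContDiff ℝ 2 u) (j : Fin n) :
    ContDiff ℝ 1 (flux a u j) :=
  ContDiff.sum fun i _ => ((ha i j).of_le (by norm_num)).mul (contDiff_pd i hu)

lemma flux_mul (hu : Differentiable ℝ u) (hv : Differentiable ℝ v) (j : Fin n) :
    flux a (fun y => u y * v y) j = fun y => v y * flux a u j y + u y * flux a v j y := by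
  funext y
  simp only [flux, pd_mul (hu y) (hv y), Finset.mul_sum, ← Finset.sum_add_distrib]
  exact Finset.sum_congr rfl fun i _ => by ring

lemma sum_pd_mul_flux (a : Fin n → Fin n → (Fin n → ℝ) → ℝ) (u v : (Fin n → ℝ) → ℝ)
    (x : Fin n → ℝ) :
    ∑ j, pd j v x * flux a u j x = coeffForm a x (grad u x) (grad v x) := by
  simp only [flux, coeffForm, Matrix.toBilin'_apply, Matrix.of_apply, grad, Finset.mul_sum]
  rw [Finset.sum_comm]
  exact Finset.sum_congr rfl fun i _ => Finset.sum_congr rfl fun j _ => by ring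

lemma coeffForm_comm (hsymm : ∀ i j x, a i j x = a j i x) (ξ η : Fin n → ℝ) :
    coeffForm a x ξ η = coeffForm a x η ξ := by
  simp only [coeffForm, Matrix.toBilin'_apply, Matrix.of_apply]
  rw [Finset.sum_comm]
  exact Finset.sum_congr rfl fun i _ => Finset.sum_congr rfl fun j _ => by rw [hsymm]; ring

lemma divOp_mul (ha : ∀ i j, ContDiff ℝ 2 (a i j)) (hsymm : ∀ i j x, a i j x = a j i x)
    (hu : ContDiff ℝ 2 u) (hv : ContDiff ℝ 2 v) :
    divOp a (fun y => u y * v y) x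
      = u x * divOp a v x + v x * divOp a u x + 2 * coeffForm a x (grad u x) (grad v x) := by
  have hu' := hu.differentiable two_ne_zero
  have hv' := hv.differentiable two_ne_zero
  have hflux : ∀ w, ContDiff ℝ 2 w → ∀ j, Differentiable ℝ (flux a w j) := fun w hw j =>
    (contDiff_flux ha hw j).differentiable one_ne_zero
  have hterm : ∀ j, pd j (fun y => v y * flux a u j y + u y * flux a v j y) x
      = (pd j v x * flux a u j x + v x * pd j (flux a u j) x)
        + (pd j u x * flux a v j x + u x * pd j (flux a v j) x) := fun j => by
    rw [pd_add ((hv' x).fun_mul (hflux u hu j x)) ((hu' x).fun_mul (hflux v hv j x)),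
      pd_mul (hv' x) (hflux u hu j x), pd_mul (hu' x) (hflux v hv j x)]
  simp only [divOp, flux_mul hu' hv', hterm, Finset.sum_add_distrib, ← Finset.mul_sum,
    sum_pd_mul_flux]
  rw [coeffForm_comm hsymm (grad v x)]
  ring

lemma divOp_const (a : Fin n → Fin n → (Fin n → ℝ) → ℝ) (r : ℝ) (x : Fin n → ℝ) :
    divOp a (fun _ => r) x = 0 := by
  have hflux : ∀ j, flux a (fun _ => r) j = fun _ => 0 := fun j =>
    funext fun y => by simp [flux, pd_const]
  simp [divOp, hflux, pd_const]

lemma divOp_inv (ha : ∀ i j, ContDiff ℝ 2 (a i j)) (hsymm : ∀ i j x, a i j x = a j i x)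
    (hu : ContDiff ℝ 2 u) (hne : ∀ y, u y ≠ 0) :
    divOp a (fun y => (u y)⁻¹) x
      = -(u x ^ 2)⁻¹ * divOp a u x + 2 * (u x ^ 3)⁻¹ * coeffForm a x (grad u x) (grad u x) := by
  have h := divOp_mul (u := fun y => (u y)⁻¹) (x := x) ha hsymm (hu.inv hne) hu
  rw [show (fun y => (u y)⁻¹ * u y) = fun _ => 1 from funext fun y => inv_mul_cancel₀ (hne y),
    divOp_const, grad_inv ((hu.differentiable two_ne_zero) x) (hne x)] at h
  simp only [map_smul, LinearMap.smul_apply, smul_eq_mul] at h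
  generalize divOp a (fun y => (u y)⁻¹) x = D at h ⊢
  have hx := hne x
  field_simp at h ⊢
  linear_combination -h

lemma divOp_sq (ha : ∀ i j, ContDiff ℝ 2 (a i j)) (hsymm : ∀ i j x, a i j x = a j i x)
    (hu : ContDiff ℝ 2 u) :
    divOp a (fun y => u y ^ 2) x
      = 2 * u x * divOp a u x + 2 * coeffForm a x (grad u x) (grad u x) := by
  simp only [sq, divOp_mul ha hsymm hu hu]
  ring

lemma sum_drift_mul (β : Fin n → ℝ) (g w : (Fin n → ℝ) → ℝ) :
    ∑ i, (β i + 2 * ∑ j, a i j x * pd j g x / g x) * pd i w x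
      = β ⬝ᵥ grad w x + 2 / g x * coeffForm a x (grad w x) (grad g x) := by
  simp only [coeffForm, Matrix.toBilin'_apply, Matrix.of_apply, dotProduct, grad, add_mul,
    Finset.sum_add_distrib, Finset.mul_sum, Finset.sum_mul]
  congr 1
  exact Finset.sum_congr rfl fun i _ => Finset.sum_congr rfl fun j _ => by ring

lemma neg_divOp_sq_mul_add_drift {e g : (Fin n → ℝ) → ℝ} (ha : ∀ i j, ContDiff ℝ 2 (a i j))
    (hsymm : ∀ i j x, a i j x = a j i x) (he : ContDiff ℝ 2 e) (hg : ContDiff ℝ 2 g)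
    (hgx : g x ≠ 0) (β : Fin n → ℝ) :
    -divOp a (fun y => e y ^ 2 * g y) x
        + ∑ i, (β i + 2 * ∑ j, a i j x * pd j g x / g x) * pd i (fun y => e y ^ 2 * g y) x
      = 2 * e x * g x * (-divOp a e x + β ⬝ᵥ grad e x)
        - 2 * g x * coeffForm a x (grad e x) (grad e x)
        + e x ^ 2 * (-divOp a g x + β ⬝ᵥ grad g x
          + 2 / g x * coeffForm a x (grad g x) (grad g x)) := by
  have he' := he.differentiable two_ne_zero x
  have hg' := hg.differentiable two_ne_zero x
  rw [sum_drift_mul, divOp_mul ha hsymm (he.pow 2) hg, divOp_sq ha hsymm he,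
    grad_mul (he'.fun_pow 2) hg', grad_sq he']
  simp only [map_add, map_smul, LinearMap.add_apply, LinearMap.smul_apply, smul_eq_mul,
    dotProduct_add, dotProduct_smul]
  field_simp
  ring

lemma divOp_inv_potential (ha : ∀ i j, ContDiff ℝ 2 (a i j))
    (hsymm : ∀ i j x, a i j x = a j i x) (hu : ContDiff ℝ 2 u) (hne : ∀ y, u y ≠ 0)
    (β : Fin n → ℝ) :
    -divOp a (fun y => (u y)⁻¹) x + β ⬝ᵥ grad (fun y => (u y)⁻¹) x
        + 2 / (u x)⁻¹ * coeffForm a x (grad (fun y => (u y)⁻¹) x) (grad (fun y => (u y)⁻¹) x)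
      = (u x ^ 2)⁻¹ * (divOp a u x - β ⬝ᵥ grad u x) := by
  rw [divOp_inv ha hsymm hu hne, grad_inv ((hu.differentiable two_ne_zero) x) (hne x)]
  simp only [map_smul, LinearMap.smul_apply, smul_eq_mul, dotProduct_smul]
  have hx := hne x
  field_simp
  ring

lemma coeffForm_self_nonneg {lam : ℝ} (hlam : 0 ≤ lam) {ξ : Fin n → ℝ}
    (hell : lam * ∑ i, ξ i ^ 2 ≤ ∑ i, ∑ j, a i j x * ξ i * ξ j) :
    0 ≤ coeffForm a x ξ ξ := by
  have h : coeffForm a x ξ ξ = ∑ i, ∑ j, a i j x * ξ i * ξ j := by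
    simp only [coeffForm, Matrix.toBilin'_apply, Matrix.of_apply]
    exact Finset.sum_congr rfl fun i _ => Finset.sum_congr rfl fun j _ => by ring
  exact h ▸ le_trans (by positivity) hell

end DivergenceForm

lemma mul_le_mul_sq_of_abs_le {z d C : ℝ} (h : |d| ≤ C * |z|) : z * d ≤ C * z ^ 2 :=
  calc z * d ≤ |z| * |d| := (le_abs_self _).trans (abs_mul _ _).le
    _ ≤ |z| * (C * |z|) := by gcongr
    _ = C * z ^ 2 := by rw [← sq_abs z]; ring

end

theorem lemma31_pointwise_general (n : ℕ) (Ω' : Set (Fin n → ℝ))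
    (a : Fin n → Fin n → (Fin n → ℝ) → ℝ) (b : Fin n → (Fin n → ℝ) → ℝ)
    (c : (Fin n → ℝ) → ℝ)
    (ha : ∀ i j, ContDiff ℝ 2 (a i j))
    (hsymm : ∀ i j x, a i j x = a j i x)
    (lam : ℝ) (hlam : 0 < lam)
    (hell : ∀ x ξ : Fin n → ℝ, lam * ∑ i, ξ i ^ 2 ≤ ∑ i, ∑ j, a i j x * ξ i * ξ j)
    (cnorm : ℝ) (hcB : BddAbove (Set.range fun x => |c x|))
    (hcnorm : cnorm = ⨆ x, |c x|)
    (F : (Fin n → ℝ) → ℝ → ℝ) (C : ℝ)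
    (hF : ∀ x z z', |F x z - F x z'| ≤ C * |z - z'|)
    (gt : (Fin n → ℝ) → ℝ) (hgt : ContDiff ℝ 2 gt)
    (hgtpos : ∀ x, 0 < gt x)
    (hgteq : ∀ x ∈ Ω',
      (∑ j, pd j (fun y => ∑ i, a i j y * pd i gt y) x)
        + 2 * (C + cnorm) * gt x - ∑ i, b i x * pd i gt x ≤ 0)
    (g : (Fin n → ℝ) → ℝ) (hg : g = fun x => (gt x)⁻¹)
    (u₁ u₂ : (Fin n → ℝ) → ℝ) (hu₁ : ContDiff ℝ 2 u₁) (hu₂ : ContDiff ℝ 2 u₂)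
    (e : (Fin n → ℝ) → ℝ) (he : e = fun x => u₁ x - u₂ x)
    (heq : ∀ x ∈ Ω',
      -(∑ j, pd j (fun y => ∑ i, a i j y * pd i e y) x)
        + (∑ i, b i x * pd i e x) + c x * e x = F x (u₁ x) - F x (u₂ x))
    (Φ : (Fin n → ℝ) → ℝ) (hΦ : Φ = fun x => (e x) ^ 2 * g x)
    (ci : Fin n → (Fin n → ℝ) → ℝ)
    (hci : ∀ i x, ci i x = b i x + 2 * ∑ j, a i j x * pd j g x / g x) :
    ∀ x ∈ Ω',
      -(∑ j, pd j (fun y => ∑ i, a i j y * pd i Φ y) x)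
        + ∑ i, ci i x * pd i Φ x ≤ 0 := by
  intro x hx
  subst hg hΦ hcnorm
  have he2 : ContDiff ℝ 2 e := he ▸ hu₁.sub hu₂
  have hgt0 : ∀ y, gt y ≠ 0 := fun y => (hgtpos y).ne'
  have hpde : -divOp a e x + (fun i => b i x) ⬝ᵥ grad e x
      = F x (u₁ x) - F x (u₂ x) - c x * e x :=
    eq_sub_of_add_eq (heq x hx)
  have hsuper : (gt x)⁻¹ * (divOp a gt x - (fun i => b i x) ⬝ᵥ grad gt x)
      ≤ -(2 * (C + ⨆ x, |c x|)) := by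
    have h := hgteq x hx
    change divOp a gt x + _ - (fun i => b i x) ⬝ᵥ grad gt x ≤ 0 at h
    exact (inv_mul_le_iff₀ (hgtpos x)).2 (by linarith)
  have hlip : e x * (F x (u₁ x) - F x (u₂ x)) ≤ C * e x ^ 2 :=
    mul_le_mul_sq_of_abs_le (he ▸ hF x (u₁ x) (u₂ x))
  have hcx : -c x * e x ^ 2 ≤ (⨆ x, |c x|) * e x ^ 2 :=
    mul_le_mul_of_nonneg_right ((neg_le_abs _).trans (le_ciSup hcB x)) (sq_nonneg _)
  have hQ := coeffForm_self_nonneg (x := x) hlam.le (hell x (grad e x))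
  simp only [hci]
  change -divOp a _ x + _ ≤ 0
  rw [neg_divOp_sq_mul_add_drift (g := fun y => (gt y)⁻¹) ha hsymm he2 (hgt.inv hgt0) (inv_ne_zero (hgt0 x)),
    divOp_inv_potential ha hsymm hgt hgt0, hpde, sq (gt x), mul_inv]
  have hginv : 0 ≤ (gt x)⁻¹ := inv_nonneg.2 (hgtpos x).le
  linarith [mul_le_mul_of_nonneg_left hlip hginv, mul_le_mul_of_nonneg_left hcx hginv,
    mul_nonneg hginv hQ, mul_le_mul_of_nonneg_left hsuper (mul_nonneg (sq_nonneg (e x)) hginv)]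

/-- (Lemma 3.1, pointwise form) Let `g̃` be strictly positive, bounded and satisfy
`Σ ∂_j(a_{ij} ∂_i g̃) + 2(C + ‖c‖_∞) g̃ − Σ b_i ∂_i g̃ ≤ 0` in `Ω'`, and set `g = g̃⁻¹`.
If `e = u₁ − u₂` is bounded and solves
`−Σ ∂_j(a_{ij} ∂_i e) + Σ b_i ∂_i e + c e = F(x,u₁) − F(x,u₂)` in `Ω'`, then
`Φ = e² g` satisfies `−Σ ∂_j(a_{ij} ∂_i Φ) + Σ c_i ∂_i Φ ≤ 0` pointwise in `Ω'`,
where `c_i = b_i + 2 Σ_j a_{ij} (∂_j g)/g`. -/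
theorem lemma31_pointwise (n : ℕ) (Ω' : Set (Fin n → ℝ))
    (hΩo : IsOpen Ω') (hΩb : Bornology.IsBounded Ω')
    (a : Fin n → Fin n → (Fin n → ℝ) → ℝ) (b : Fin n → (Fin n → ℝ) → ℝ)
    (c : (Fin n → ℝ) → ℝ)
    (ha : ∀ i j, ContDiff ℝ 2 (a i j)) (hb : ∀ i, ContDiff ℝ 2 (b i))
    (hc : ContDiff ℝ 2 c)
    (hsymm : ∀ i j x, a i j x = a j i x)
    (lam Lam : ℝ) (hlam : 0 < lam) (hlL : lam ≤ Lam)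
    (hell : ∀ x ξ : Fin n → ℝ, lam * ∑ i, ξ i ^ 2 ≤ ∑ i, ∑ j, a i j x * ξ i * ξ j)
    (haB : ∀ i j x, |a i j x| ≤ Lam)
    (cnorm : ℝ) (hcB : BddAbove (Set.range fun x => |c x|))
    (hcnorm : cnorm = ⨆ x, |c x|)
    (F : (Fin n → ℝ) → ℝ → ℝ) (C : ℝ) (hC : 0 < C)
    (hF : ∀ x z z', |F x z - F x z'| ≤ C * |z - z'|)
    (gt : (Fin n → ℝ) → ℝ) (hgt : ContDiff ℝ 2 gt)
    (hgtpos : ∀ x, 0 < gt x) (hgtB : ∃ M, ∀ x, gt x ≤ M)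
    (hgteq : ∀ x ∈ Ω',
      (∑ j, pd j (fun y => ∑ i, a i j y * pd i gt y) x)
        + 2 * (C + cnorm) * gt x - ∑ i, b i x * pd i gt x ≤ 0)
    (g : (Fin n → ℝ) → ℝ) (hg : g = fun x => (gt x)⁻¹)
    (u₁ u₂ : (Fin n → ℝ) → ℝ) (hu₁ : ContDiff ℝ 2 u₁) (hu₂ : ContDiff ℝ 2 u₂)
    (e : (Fin n → ℝ) → ℝ) (he : e = fun x => u₁ x - u₂ x)
    (heB : ∃ M, ∀ x, |e x| ≤ M)
    (heq : ∀ x ∈ Ω',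
      -(∑ j, pd j (fun y => ∑ i, a i j y * pd i e y) x)
        + (∑ i, b i x * pd i e x) + c x * e x = F x (u₁ x) - F x (u₂ x))
    (Φ : (Fin n → ℝ) → ℝ) (hΦ : Φ = fun x => (e x) ^ 2 * g x)
    (ci : Fin n → (Fin n → ℝ) → ℝ)
    (hci : ∀ i x, ci i x = b i x + 2 * ∑ j, a i j x * pd j g x / g x) :
    ∀ x ∈ Ω',
      -(∑ j, pd j (fun y => ∑ i, a i j y * pd i Φ y) x)
        + ∑ i, ci i x * pd i Φ x ≤ 0 :=
  lemma31_pointwise_general n Ω' a b c ha hsymm lam hlam hell cnorm hcB hcnorm F C hF gt hgt hgtpos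
    hgteq g hg u₁ u₂ hu₁ hu₂ e he heq Φ hΦ ci hci
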